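/- Let (X,T) be a topological dynamical system. If x ∈ X is F_ps-product recurrent, then x is a minimal point. -/

import Mathlib

open Set Filter Topology Function

namespace PaperFormal

/-- The return-time set `N(x,U) = {n ∈ ℤ₊ : Tⁿ x ∈ U}`. -/
def retTimes {X : Type} (T : X → X) (x : X) (U : Set X) : Set ℕ :=
  {n : ℕ | T^[n] x ∈ U}

/-- A point is recurrent if `N(x,U)` is infinite for every neighborhood `U` of `x`. -/
def RecurrentPt {X : Type} [TopologicalSpace X] (T : X → X) (x : X) : Prop :=
  ∀ U ∈ nhds x, (retTimes T x U).Infinite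

/-- The (forward) orbit closure of a point. -/
def orbitClosure {X : Type} [TopologicalSpace X] (T : X → X) (x : X) : Set X :=
  closure (Set.range fun n : ℕ => T^[n] x)

/-- A pair `(x,y)` is proximal if `lim T^{nᵢ} x = lim T^{nᵢ} y` along some sequence `nᵢ`. -/
def ProximalPair {X : Type} [TopologicalSpace X] (T : X → X) (x y : X) : Prop :=
  ∃ (u : ℕ → ℕ) (z : X),
    Tendsto (fun i => T^[u i] x) atTop (nhds z) ∧
    Tendsto (fun i => T^[u i] y) atTop (nhds z)

/-- A point `x` is distal if every `y` in its orbit closure proximal to `x` equals `x`. -/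
def DistalPt {X : Type} [TopologicalSpace X] (T : X → X) (x : X) : Prop :=
  ∀ y ∈ orbitClosure T x, ProximalPair T x y → y = x

/-- `A` is a minimal set: nonempty, closed, invariant, with no proper such subset. -/
def IsMinimalSet {X : Type} [TopologicalSpace X] (T : X → X) (A : Set X) : Prop :=
  A.Nonempty ∧ IsClosed A ∧ Set.MapsTo T A A ∧
    ∀ B ⊆ A, B.Nonempty → IsClosed B → Set.MapsTo T B B → B = A

/-- A point is minimal (almost periodic) if its orbit closure is a minimal set. -/
def IsMinimalPt {X : Type} [TopologicalSpace X] (T : X → X) (x : X) : Prop :=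
  IsMinimalSet T (orbitClosure T x)

/-- A minimal system: no proper nonempty closed invariant subset. -/
def MinimalSys {X : Type} [TopologicalSpace X] (T : X → X) : Prop :=
  ∀ B : Set X, B.Nonempty → IsClosed B → Set.MapsTo T B B → B = Set.univ

/-- A transitive system: `N(U,V)` is infinite for all opene `U`, `V`. -/
def TransitiveSys {X : Type} [TopologicalSpace X] (T : X → X) : Prop :=
  ∀ U V : Set X, IsOpen U → IsOpen V → U.Nonempty → V.Nonempty →
    {n : ℕ | (U ∩ T^[n] ⁻¹' V).Nonempty}.Infinite

/-- Transitivity of the subsystem on an invariant subset `A` (relative open sets). -/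
def TransitiveOn {X : Type} [TopologicalSpace X] (T : X → X) (A : Set X) : Prop :=
  ∀ U V : Set X, IsOpen U → IsOpen V → (U ∩ A).Nonempty → (V ∩ A).Nonempty →
    {n : ℕ | (U ∩ A ∩ T^[n] ⁻¹' V).Nonempty}.Infinite

/-- A transitive point: a point with dense forward orbit. -/
def TransPt {X : Type} [TopologicalSpace X] (T : X → X) (x : X) : Prop :=
  Dense (Set.range fun n : ℕ => T^[n] x)

/-- Finite sums of the sequence `p` over nonempty finite index sets contained in `[n,∞)`. -/
def FSfrom (p : ℕ → ℕ) (n : ℕ) : Set ℕ :=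
  {m | ∃ α : Finset ℕ, α.Nonempty ∧ (∀ i ∈ α, n ≤ i) ∧ m = ∑ i ∈ α, p i}

/-- Finite sums of the sequence `p` over nonempty finite index sets. -/
def FS (p : ℕ → ℕ) : Set ℕ := FSfrom p 0

/-- An IP set: a set containing all finite sums of some sequence of natural numbers. -/
def IPSet (A : Set ℕ) : Prop :=
  ∃ p : ℕ → ℕ, (∀ i, 0 < p i) ∧ FS p ⊆ A

/-- An IP* set: a set meeting every IP set. -/
def IPStar (A : Set ℕ) : Prop :=
  ∀ B : Set ℕ, IPSet B → (A ∩ B).Nonempty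

/-- A syndetic set: a set with bounded gaps. -/
def Syndetic (S : Set ℕ) : Prop :=
  ∃ N : ℕ, ∀ m : ℕ, ∃ k ∈ S, m ≤ k ∧ k ≤ m + N

/-- A thick set: a set containing arbitrarily long runs of consecutive integers. -/
def Thick (S : Set ℕ) : Prop :=
  ∀ n : ℕ, ∃ m : ℕ, ∀ i ≤ n, m + i ∈ S

/-- A piecewise syndetic set: an intersection of a syndetic set with a thick set. -/
def PiecewiseSyndetic (A : Set ℕ) : Prop :=
  ∃ S₁ S₂ : Set ℕ, Syndetic S₁ ∧ Thick S₂ ∧ A = S₁ ∩ S₂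

/-- A thickly syndetic set: a set meeting every piecewise syndetic set. -/
def ThicklySyndetic (A : Set ℕ) : Prop :=
  ∀ B : Set ℕ, PiecewiseSyndetic B → (A ∩ B).Nonempty

/-- `x` is `F`-recurrent for the family `F` if `N(x,U) ∈ F` for every neighborhood `U`. -/
def FRecurrentPt {X : Type} [TopologicalSpace X] (F : Set (Set ℕ)) (T : X → X) (x : X) :
    Prop :=
  ∀ U ∈ nhds x, retTimes T x U ∈ F

/-- `x` is `F`-product recurrent: `(x,y)` is recurrent for every `F`-recurrent point `y`
in any topological dynamical system `(Y,S)`. -/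
def FProductRecurrent {X : Type} [TopologicalSpace X] (F : Set (Set ℕ)) (T : X → X)
    (x : X) : Prop :=
  ∀ (Y : Type) [MetricSpace Y] [CompactSpace Y] (S : Y → Y),
    Continuous S → Function.Surjective S →
      ∀ y : Y, FRecurrentPt F S y → RecurrentPt (Prod.map T S) (x, y)

/-- A joining of `(X,T)` and `(Y,S)`: a nonempty closed invariant subset of `X × Y`
projecting onto both coordinates. -/
def Joining {X Y : Type} [TopologicalSpace X] [TopologicalSpace Y]
    (T : X → X) (S : Y → Y) (J : Set (X × Y)) : Prop :=
  J.Nonempty ∧ IsClosed J ∧ Set.MapsTo (Prod.map T S) J J ∧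
    Prod.fst '' J = Set.univ ∧ Prod.snd '' J = Set.univ

/-- Two systems are disjoint if their only joining is the full product. -/
def DisjointSys {X Y : Type} [TopologicalSpace X] [TopologicalSpace Y]
    (T : X → X) (S : Y → Y) : Prop :=
  ∀ J : Set (X × Y), Joining T S J → J = Set.univ

/-- Property (★) of a point: for each neighborhood `V` of `x` there is `n` such that for
every finite set `S` whose distinct elements are at distance `≥ n`, some common shift `ℓ`
puts all of `T^{s+ℓ} x`, `s ∈ S`, inside `V`. -/
def StarProp {X : Type} [TopologicalSpace X] (T : X → X) (x : X) : Prop :=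
  ∀ V ∈ nhds x, ∃ n : ℕ, ∀ S : Finset ℕ,
    (∀ s ∈ S, ∀ t ∈ S, s < t → n ≤ t - s) →
      ∃ ℓ : ℕ, ∀ s ∈ S, T^[s + ℓ] x ∈ V

/-- `F` is an independence set for the pair `(U₀, U₁)`. -/
def IndepSet {X : Type} (T : X → X) (U₀ U₁ : Set X) (F : Set ℕ) : Prop :=
  ∀ J : Finset ℕ, ↑J ⊆ F → J.Nonempty → ∀ s : ℕ → Bool,
    (⋂ j ∈ J, T^[j] ⁻¹' (if s j then U₁ else U₀)).Nonempty

/-! If some return-time set `N(x,U)` is not syndetic, its complement `A` is thick. Inside the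
long intervals of `A` one writes, for every length `ℓ` and count `c`, a block of `c` consecutive
copies of the prefix of length `ℓ` of a sequence `y ∈ {0,1}^ℕ` with `y 0 = 1` that vanishes
elsewhere. The occurrences of each prefix of `y` then contain arbitrarily long arithmetic
progressions with a fixed step, so `y` is `F_ps`-recurrent under the shift. But `(x, y)` can only
return to `U × [1]` at times in `N(x,U) ∩ ({0} ∪ A) = {0}`, contradicting product recurrence.
Hence every `N(x,U)` is syndetic, which makes `x` minimal. -/

section OrbitClosure

variable {X : Type} [TopologicalSpace X] {T : X → X}

lemma iterate_mem_orbitClosure (T : X → X) (x : X) (n : ℕ) : T^[n] x ∈ orbitClosure T x :=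
  subset_closure ⟨n, rfl⟩

lemma mapsTo_orbitClosure (hT : Continuous T) (x : X) :
    MapsTo T (orbitClosure T x) (orbitClosure T x) :=
  MapsTo.closure (fun _ ⟨n, hn⟩ => ⟨n + 1, hn ▸ iterate_succ_apply' T n x⟩) hT

lemma mem_of_syndetic_retTimes [RegularSpace X] (hT : Continuous T) {x : X}
    (hx : ∀ U ∈ 𝓝 x, Syndetic (retTimes T x U)) {B : Set X} (hBx : B ⊆ orbitClosure T x)
    (hB : B.Nonempty) (hBc : IsClosed B) (hBT : MapsTo T B B) : x ∈ B := by
  by_contra hxB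
  obtain ⟨K, hK, hKc, hKB⟩ := exists_mem_nhds_isClosed_subset (hBc.isOpen_compl.mem_nhds hxB)
  obtain ⟨N, hN⟩ := hx K hK
  -- the orbit enters `K` within `N` steps from anywhere; being closed, this passes to `B`
  have horbit : orbitClosure T x ⊆ ⋃ g ∈ Finset.range (N + 1), T^[g] ⁻¹' K := by
    refine closure_minimal ?_ (isClosed_biUnion_finset fun g _ => hKc.preimage (hT.iterate g))
    rintro _ ⟨n, rfl⟩
    obtain ⟨k, hk, hnk, hkn⟩ := hN n
    refine mem_biUnion (Finset.mem_range.2 (show k - n < N + 1 by omega)) ?_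
    rwa [mem_preimage, ← iterate_add_apply, Nat.sub_add_cancel hnk]
  obtain ⟨z, hz⟩ := hB
  obtain ⟨g, -, hg⟩ := mem_iUnion₂.1 (horbit (hBx hz))
  exact hKB hg (hBT.iterate g hz)

theorem isMinimalPt_of_syndetic_retTimes [RegularSpace X] (hT : Continuous T) {x : X}
    (hx : ∀ U ∈ 𝓝 x, Syndetic (retTimes T x U)) : IsMinimalPt T x := by
  refine ⟨⟨x, iterate_mem_orbitClosure T x 0⟩, isClosed_closure, mapsTo_orbitClosure hT x,
    fun B hBx hB hBc hBT => hBx.antisymm (closure_minimal ?_ hBc)⟩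
  rintro _ ⟨n, rfl⟩
  exact hBT.iterate n (mem_of_syndetic_retTimes hT hx hBx hB hBc hBT)

end OrbitClosure

section Families

lemma thick_compl_of_not_syndetic {S : Set ℕ} (h : ¬ Syndetic S) : Thick Sᶜ := by
  intro n
  obtain ⟨m, hm⟩ : ∃ m, ∀ k ∈ S, m ≤ k → m + n < k := by
    simp only [Syndetic, not_exists, not_forall, not_and, not_le] at h
    exact h n
  exact ⟨m, fun i hi hS => by have := hm _ hS (Nat.le_add_right m i); omega⟩

lemma Thick.exists_add_run {A : Set ℕ} (hA : Thick A) (N E : ℕ) :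
    ∃ o, ∀ i < N, E + o + i ∈ A := by
  obtain ⟨m, hm⟩ := hA (E + N)
  exact ⟨m, fun i hi => by convert hm (E + i) (by omega) using 1; omega⟩

lemma PiecewiseSyndetic.of_inter_subset {S₁ S₂ A : Set ℕ} (h₁ : Syndetic S₁) (h₂ : Thick S₂)
    (h : S₁ ∩ S₂ ⊆ A) : PiecewiseSyndetic A := by
  refine ⟨S₁ ∪ A, S₂ ∪ A, ?_, ?_, ?_⟩
  · obtain ⟨N, hN⟩ := h₁
    exact ⟨N, fun m => (hN m).imp fun k hk => ⟨Or.inl hk.1, hk.2⟩⟩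
  · exact fun n => (h₂ n).imp fun m hm i hi => Or.inl (hm i hi)
  · ext n
    constructor
    · exact fun hn => ⟨Or.inr hn, Or.inr hn⟩
    · rintro ⟨h₁' | h₁', h₂' | h₂'⟩
      exacts [h ⟨h₁', h₂'⟩, h₂', h₁', h₁']

lemma PiecewiseSyndetic.mono {A B : Set ℕ} (hA : PiecewiseSyndetic A) (hAB : A ⊆ B) :
    PiecewiseSyndetic B := by
  obtain ⟨S₁, S₂, h₁, h₂, rfl⟩ := hA
  exact of_inter_subset h₁ h₂ hAB

/-- The progressions, thickened to intervals, form the thick set on which `A` has gaps `≤ d`. -/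
lemma piecewiseSyndetic_of_arith_runs {A : Set ℕ} {d : ℕ} (hd : 0 < d)
    (h : ∀ L, ∃ s, ∀ q ≤ L, s + q * d ∈ A) : PiecewiseSyndetic A := by
  choose s hs using h
  set R := ⋃ L, Ico (s L) (s L + L * d)
  refine PiecewiseSyndetic.of_inter_subset (S₁ := A ∪ Rᶜ) (S₂ := R)
    ⟨d, fun p => ?_⟩ ?_ ?_
  · by_cases hp : p ∈ R
    · obtain ⟨L, hL⟩ := mem_iUnion.1 hp
      rw [mem_Ico] at hL
      have hq : (p - s L) / d < L := Nat.div_lt_of_lt_mul (by rw [mul_comm]; omega)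
      have h₁ := Nat.lt_div_mul_add (a := p - s L) hd
      have h₂ := Nat.div_mul_le_self (p - s L) d
      exact ⟨s L + ((p - s L) / d + 1) * d, Or.inl (hs L _ hq), by rw [add_mul]; omega,
        by rw [add_mul]; omega⟩
    · exact ⟨p, Or.inr hp, le_rfl, by omega⟩
  · intro n
    refine ⟨s (n + 1), fun i hi => mem_iUnion.2 ⟨n + 1, le_self_add, ?_⟩⟩
    have := Nat.le_mul_of_pos_right (n + 1) hd
    omega
  · rintro p ⟨hA | hR, hp⟩
    exacts [hA, (hR hp).elim]

end Families

section CopyWord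

/-- `Nat.unpair` makes every pair (length `ℓ`, count `c`) occur as some stage `j`. -/
def period (j : ℕ) : ℕ := (Nat.unpair j).1 + 1

lemma period_pos (j : ℕ) : 0 < period j := Nat.succ_pos _

def reps (j : ℕ) : ℕ := (Nat.unpair j).2 + 1

def regionLen (j : ℕ) : ℕ := period j * reps j

variable (g : ℕ → ℕ → ℕ)

/-- Region `j` starts at offset `g j` beyond this bound, which lies past region `j - 1` and past
`period j` (so that copying the prefix of length `period j` into region `j` is well founded). -/
def regionFloor : ℕ → ℕ
  | 0 => period 0
  | j + 1 => regionFloor j + g j (regionFloor j) + regionLen j + period (j + 1)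

def regionStart (j : ℕ) : ℕ := regionFloor g j + g j (regionFloor g j)

def region (j : ℕ) : Set ℕ := Ico (regionStart g j) (regionStart g j + regionLen j)

lemma period_le_regionStart (j : ℕ) : period j ≤ regionStart g j := by
  cases j <;> simp only [regionStart, regionFloor] <;> omega

lemma regionStart_add_regionLen_le_succ (j : ℕ) :
    regionStart g j + regionLen j ≤ regionStart g (j + 1) := by
  simp only [regionStart, regionFloor]
  omega

lemma eq_of_mem_region {n j j' : ℕ} (h : n ∈ region g j) (h' : n ∈ region g j') : j = j' := by
  have hmono : Monotone (regionStart g) := monotone_nat_of_le_succ fun k =>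
    (Nat.le_add_right _ _).trans (regionStart_add_regionLen_le_succ g k)
  have disjoint {i i' : ℕ} (hi : i < i') : regionStart g i + regionLen i ≤ regionStart g i' :=
    (regionStart_add_regionLen_le_succ g i).trans (hmono hi)
  simp only [region, mem_Ico] at h h'
  rcases lt_trichotomy j j' with hj | hj | hj
  · have := disjoint hj; omega
  · exact hj
  · have := disjoint hj; omega

open Classical in
noncomputable def copyWord (n : ℕ) : Bool :=
  if n = 0 then true
  else if h : ∃ j, n ∈ region g j then
    copyWord ((n - regionStart g (Nat.find h)) % period (Nat.find h))
  else false
termination_by n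
decreasing_by
  have h₁ := (Nat.find_spec h).1
  have h₂ := period_le_regionStart g (Nat.find h)
  have h₃ := Nat.mod_lt (n - regionStart g (Nat.find h)) (period_pos (Nat.find h))
  omega

lemma copyWord_zero : copyWord g 0 = true := by
  rw [copyWord, if_pos rfl]

open Classical in
lemma copyWord_of_mem_region {n j : ℕ} (h : n ∈ region g j) :
    copyWord g n = copyWord g ((n - regionStart g j) % period j) := by
  have hn : n ≠ 0 := by
    have := period_le_regionStart g j
    have := period_pos j
    simp only [region, mem_Ico] at h
    omega
  have hex : ∃ j, n ∈ region g j := ⟨j, h⟩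
  rw [copyWord, if_neg hn, dif_pos hex, eq_of_mem_region g (Nat.find_spec hex) h]

open Classical in
lemma exists_mem_region_of_copyWord {n : ℕ} (h : copyWord g n = true) (hn : n ≠ 0) :
    ∃ j, n ∈ region g j := by
  by_contra hex
  rw [copyWord, if_neg hn, dif_neg hex] at h
  exact Bool.false_ne_true h

lemma copyWord_regionStart_add {j q r : ℕ} (hq : q < reps j) (hr : r < period j) :
    copyWord g (regionStart g j + q * period j + r) = copyWord g r := by
  have hlt : q * period j + r < regionLen j :=
    calc q * period j + r < (q + 1) * period j := by rw [add_mul]; omega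
      _ ≤ reps j * period j := Nat.mul_le_mul_right _ hq
      _ = regionLen j := mul_comm _ _
  rw [copyWord_of_mem_region g (j := j) (by simp only [region, mem_Ico]; omega), add_assoc,
    Nat.add_sub_cancel_left, Nat.add_comm, Nat.add_mul_mod_self_right, Nat.mod_eq_of_lt hr]

end CopyWord

theorem Thick.exists_supported_psRecurrent_word {A : Set ℕ} (hA : Thick A) :
    ∃ y : ℕ → Bool, y 0 = true ∧ (∀ n, y n = true → n ≠ 0 → n ∈ A) ∧
      ∀ m, PiecewiseSyndetic {n | ∀ r ≤ m, y (n + r) = y r} := by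
  choose g hg using fun j E => hA.exists_add_run (regionLen j) E
  refine ⟨copyWord g, copyWord_zero g, fun n hn hn0 => ?_, fun m => ?_⟩
  · obtain ⟨j, hj⟩ := exists_mem_region_of_copyWord g hn hn0
    simp only [region, mem_Ico] at hj
    have := hg j (regionFloor g j) (n - regionStart g j) (by omega)
    rwa [← regionStart, Nat.add_sub_cancel' hj.1] at this
  · refine piecewiseSyndetic_of_arith_runs (by omega : 0 < m + 1) fun L =>
      ⟨regionStart g (Nat.pair m L), fun q hq r hr => ?_⟩
    have hp : period (Nat.pair m L) = m + 1 := by simp [period]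
    have hc : reps (Nat.pair m L) = L + 1 := by simp [reps]
    rw [← hp]
    exact copyWord_regionStart_add g (by omega) (by omega)

section Shift

variable {α : Type}

def shift (z : ℕ → α) : ℕ → α := fun n => z (n + 1)

lemma shift_iterate (n : ℕ) (z : ℕ → α) : shift^[n] z = fun i => z (n + i) := by
  induction n generalizing z with
  | zero => simp
  | succ n ih => funext i; rw [iterate_succ_apply, ih]; exact congrArg z (by omega)

lemma surjective_shift : Surjective (shift : (ℕ → α) → ℕ → α) :=
  fun z => ⟨fun n => z (n - 1), rfl⟩

variable [TopologicalSpace α]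

lemma continuous_shift : Continuous (shift : (ℕ → α) → ℕ → α) :=
  continuous_pi fun n => continuous_apply (n + 1)

lemma fRecurrentPt_shift [DiscreteTopology α] {y : ℕ → α}
    (hy : ∀ m, PiecewiseSyndetic {n | ∀ r ≤ m, y (n + r) = y r}) :
    FRecurrentPt {A | PiecewiseSyndetic A} shift y := by
  intro V hV
  obtain ⟨_, ⟨z, m, rfl⟩, hyz, hzV⟩ := (PiNat.isTopologicalBasis_cylinders _).mem_nhds_iff.1 hV
  rw [← PiNat.mem_cylinder_iff_eq.1 hyz] at hzV
  refine (hy m).mono fun n hn => hzV fun i hi => ?_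
  rw [shift_iterate]
  exact hn i hi.le

end Shift

theorem statement_6_general {X : Type} [MetricSpace X] (T : X → X)
    (hTc : Continuous T) (x : X)
    (hx : FProductRecurrent {A : Set ℕ | PiecewiseSyndetic A} T x) :
    IsMinimalPt T x := by
  refine isMinimalPt_of_syndetic_retTimes hTc fun U hU => ?_
  by_contra hU_syndetic
  obtain ⟨y, hy₀, hy_supp, hy_ps⟩ :=
    (thick_compl_of_not_syndetic hU_syndetic).exists_supported_psRecurrent_word
  let _ : MetricSpace (ℕ → Bool) := PiNat.metricSpaceOfDiscreteUniformity fun _ => rfl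
  have hrec := hx (ℕ → Bool) shift continuous_shift surjective_shift y (fRecurrentPt_shift hy_ps)
  have hV : (fun z : ℕ → Bool => z 0) ⁻¹' {true} ∈ 𝓝 y :=
    (continuous_apply 0).continuousAt.preimage_mem_nhds ((isOpen_discrete _).mem_nhds hy₀)
  refine hrec _ (prod_mem_nhds hU hV) ((finite_singleton 0).subset fun n hn => ?_)
  simp only [retTimes, Prod.map_iterate, mem_prod, mem_preimage, mem_singleton_iff,
    Prod.map_fst, Prod.map_snd, shift_iterate, add_zero] at hn
  by_contra hn₀
  exact hy_supp n hn.2 hn₀ hn.1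

/-- an `F_ps`-product recurrent point is minimal. -/
theorem statement_6 {X : Type} [MetricSpace X] [CompactSpace X] (T : X → X)
    (hTc : Continuous T) (hTs : Function.Surjective T) (x : X)
    (hx : FProductRecurrent {A : Set ℕ | PiecewiseSyndetic A} T x) :
    IsMinimalPt T x :=
  statement_6_general T hTc x hx

end PaperFormal
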